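/- arXiv:1812.11054 — 3 statements merged into one kernel-verified Lean document; each statement's English description precedes it below -/
import Mathlib

section
/- Any graph obtained from the complete graph K₂ by a finite sequence of extension operations (each adding a new vertex adjacent to two distinct existing vertices) is minimally rigid in the Laman sense. -/
/-!
Induction along the extension sequence. `K₂` is Laman outright. An extension adds one vertex `v`
and two edges, so `|E| = 2|V| - 3` persists. A vertex set `X` avoiding `v` spans the same edges as
before; one containing `v` spans at most two more edges than `X \ {v}`, which is fine by the old
sparsity count unless `X \ {v}` is a single vertex, and then `X` has two vertices and spans at most
one edge since graphs are loopless.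
-/

/-- A finite simple graph given by an explicit vertex `Finset` and edge `Finset`. -/
structure FinGraph where
  verts : Finset ℕ
  edges : Finset (Sym2 ℕ)
  loopless : ∀ e ∈ edges, ¬ e.IsDiag
  edge_mem : ∀ e ∈ edges, ∀ x ∈ e, x ∈ verts

/-- `E[X]`: the edges of `G` with both endpoints in `X`. -/
def FinGraph.inducedEdges (G : FinGraph) (X : Finset ℕ) : Finset (Sym2 ℕ) :=
  G.edges ∩ X.sym2

/-- Minimally rigid (Laman) graph. -/
def FinGraph.Laman (G : FinGraph) : Prop :=
  ((G.edges.card : ℤ) = 2 * G.verts.card - 3) ∧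
  ∀ X ⊆ G.verts, 2 ≤ X.card →
    ((G.inducedEdges X).card : ℤ) ≤ 2 * X.card - 3

/-- An extension operation: add a new vertex `v` joined by exactly two edges
to two distinct existing vertices. -/
def FinGraph.IsExtension (G G₁ : FinGraph) : Prop :=
  ∃ v r₁ r₂, v ∉ G.verts ∧ r₁ ∈ G.verts ∧ r₂ ∈ G.verts ∧ r₁ ≠ r₂ ∧
    G₁.verts = insert v G.verts ∧
    G₁.edges = insert s(v, r₁) (insert s(v, r₂) G.edges)

/-- `G` is a complete graph on two vertices. -/
def FinGraph.IsK2 (G : FinGraph) : Prop :=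
  ∃ a b, a ≠ b ∧ G.verts = {a, b} ∧ G.edges = {s(a, b)}

namespace FinGraph

theorem card_inducedEdges_le_one_of_card_eq_two (G : FinGraph) {X : Finset ℕ} (hX : X.card = 2) :
    (G.inducedEdges X).card ≤ 1 := by
  obtain ⟨a, b, -, rfl⟩ := Finset.card_eq_two.mp hX
  suffices G.inducedEdges {a, b} ⊆ {s(a, b)} from
    (Finset.card_le_card this).trans (Finset.card_singleton _).le
  intro e he
  obtain ⟨heE, heX⟩ := Finset.mem_inter.mp he
  have hloop := G.loopless e heE
  induction e using Sym2.ind with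
  | _ x y =>
    simp only [Finset.mem_sym2_iff, Sym2.mem_iff, Finset.mem_insert, Finset.mem_singleton,
      forall_eq_or_imp, forall_eq, Sym2.mk_isDiag_iff] at heX hloop ⊢
    rcases heX with ⟨rfl | rfl, rfl | rfl⟩ <;> simp_all [Sym2.eq_swap]

theorem IsK2.laman {G : FinGraph} (h : G.IsK2) : G.Laman := by
  obtain ⟨a, b, hab, hV, hE⟩ := h
  have hE₁ : G.edges.card = 1 := by rw [hE, Finset.card_singleton]
  refine ⟨by rw [hE₁, hV, Finset.card_pair hab]; norm_num, fun X _ hX => ?_⟩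
  have : (G.inducedEdges X).card ≤ 1 := hE₁ ▸ Finset.card_le_card Finset.inter_subset_left
  omega

section Extension

variable {G G₁ : FinGraph} {v r₁ r₂ : ℕ}

theorem inducedEdges_eq_of_notMem (hE : G₁.edges = insert s(v, r₁) (insert s(v, r₂) G.edges))
    {X : Finset ℕ} (hvX : v ∉ X) : G₁.inducedEdges X = G.inducedEdges X := by
  have hnew : ∀ r, s(v, r) ∉ X.sym2 := fun r h =>
    hvX (Finset.mem_sym2_iff.mp h v (Sym2.mem_mk_left v r))
  rw [inducedEdges, inducedEdges, hE, Finset.insert_inter_of_notMem (hnew r₁),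
    Finset.insert_inter_of_notMem (hnew r₂)]

theorem card_inducedEdges_le_erase_add_two (hv : v ∉ G.verts)
    (hE : G₁.edges = insert s(v, r₁) (insert s(v, r₂) G.edges)) (X : Finset ℕ) :
    (G₁.inducedEdges X).card ≤ (G.inducedEdges (X.erase v)).card + 2 := by
  have hsub : G₁.inducedEdges X ⊆
      insert s(v, r₁) (insert s(v, r₂) (G.inducedEdges (X.erase v))) := by
    intro e he
    obtain ⟨heE, heX⟩ := Finset.mem_inter.mp he
    rw [hE, Finset.mem_insert, Finset.mem_insert] at heE
    rcases heE with rfl | rfl | heE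
    · exact Finset.mem_insert_self _ _
    · exact Finset.mem_insert_of_mem (Finset.mem_insert_self _ _)
    · refine Finset.mem_insert_of_mem (Finset.mem_insert_of_mem (Finset.mem_inter.mpr ⟨heE, ?_⟩))
      refine Finset.mem_sym2_iff.mpr fun x hx =>
        Finset.mem_erase.mpr ⟨?_, Finset.mem_sym2_iff.mp heX x hx⟩
      rintro rfl
      exact hv (G.edge_mem e heE x hx)
  calc (G₁.inducedEdges X).card
      ≤ (insert s(v, r₁) (insert s(v, r₂) (G.inducedEdges (X.erase v)))).card :=
        Finset.card_le_card hsub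
    _ ≤ (G.inducedEdges (X.erase v)).card + 2 :=
        (Finset.card_insert_le _ _).trans (Nat.add_le_add_right (Finset.card_insert_le _ _) 1)

theorem card_edges_eq_add_two (hv : v ∉ G.verts) (hne : r₁ ≠ r₂)
    (hE : G₁.edges = insert s(v, r₁) (insert s(v, r₂) G.edges)) :
    G₁.edges.card = G.edges.card + 2 := by
  have hold : ∀ r, s(v, r) ∉ G.edges := fun r h => hv (G.edge_mem _ h v (Sym2.mem_mk_left v r))
  have h₁₂ : s(v, r₁) ≠ s(v, r₂) := fun h => hne (Sym2.congr_right.mp h)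
  rw [hE, Finset.card_insert_of_notMem (by simp [hold, h₁₂]),
    Finset.card_insert_of_notMem (hold r₂)]

end Extension

theorem IsExtension.laman {G G₁ : FinGraph} (h : G.IsExtension G₁) (hG : G.Laman) :
    G₁.Laman := by
  obtain ⟨v, r₁, r₂, hv, -, -, hne, hV, hE⟩ := h
  obtain ⟨hcount, hsparse⟩ := hG
  refine ⟨?_, fun X hX hX2 => ?_⟩
  · rw [card_edges_eq_add_two hv hne hE, hV, Finset.card_insert_of_notMem hv]
    push_cast
    linarith
  · rw [hV] at hX
    by_cases hvX : v ∈ X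
    · have hXcard := Finset.card_erase_add_one hvX
      have hbound := card_inducedEdges_le_erase_add_two hv hE X
      rcases (show X.card = 2 ∨ 2 ≤ (X.erase v).card by omega) with hX2 | hY2
      · have := G₁.card_inducedEdges_le_one_of_card_eq_two hX2
        omega
      · have := hsparse _ (Finset.subset_insert_iff.mp hX) hY2
        omega
    · rw [inducedEdges_eq_of_notMem hE hvX]
      exact hsparse X ((Finset.subset_insert_iff_of_notMem hvX).mp hX) hX2

end FinGraph

/-- any graph obtained from `K₂` by a finite sequence of extension
operations is minimally rigid (Laman). -/
theorem extensions_from_K2_laman (G₀ G : FinGraph) (h0 : G₀.IsK2)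
    (h : Relation.ReflTransGen FinGraph.IsExtension G₀ G) : G.Laman := by
  induction h with
  | refl => exact h0.laman
  | tail _ hext ih => exact hext.laman ih
end

section
/- Let B(v) be a branch with roots r₁, r₂ and leaf v. If the removal of two vertices t₁, t₂ (with v ∉ {t₁, t₂} and at most one root in {t₁, t₂}) disconnects B(v), then the resulting graph has exactly two connected components, and the leaf v lies in a different component from the remaining root(s). -/
/-- A *branch* `B(v)`: a graph built from the `K₂` on roots `r₁, r₂` by a
sequence of extensions, in which every non-root vertex has exactly two distinct
parents added strictly earlier (witnessed by `rank`), the leaf `lf = v` is the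
last added vertex (nobody's parent), and every non-root non-leaf vertex has at
least one child (so every vertex is an ancestor of the leaf). -/
structure Branch where
  verts : Finset ℕ
  r₁ : ℕ
  r₂ : ℕ
  lf : ℕ
  root_ne : r₁ ≠ r₂
  r₁_mem : r₁ ∈ verts
  r₂_mem : r₂ ∈ verts
  leaf_mem : lf ∈ verts
  leaf_ne_r₁ : lf ≠ r₁
  leaf_ne_r₂ : lf ≠ r₂
  p₁ : ℕ → ℕ
  p₂ : ℕ → ℕ
  rank : ℕ → ℕ
  parent₁_mem : ∀ x ∈ verts, x ≠ r₁ → x ≠ r₂ → p₁ x ∈ verts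
  parent₂_mem : ∀ x ∈ verts, x ≠ r₁ → x ≠ r₂ → p₂ x ∈ verts
  parents_ne : ∀ x ∈ verts, x ≠ r₁ → x ≠ r₂ → p₁ x ≠ p₂ x
  rank_lt₁ : ∀ x ∈ verts, x ≠ r₁ → x ≠ r₂ → rank (p₁ x) < rank x
  rank_lt₂ : ∀ x ∈ verts, x ≠ r₁ → x ≠ r₂ → rank (p₂ x) < rank x
  leaf_no_child : ∀ x ∈ verts, x ≠ r₁ → x ≠ r₂ → p₁ x ≠ lf ∧ p₂ x ≠ lf
  has_child : ∀ x ∈ verts, x ≠ r₁ → x ≠ r₂ → x ≠ lf →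
    ∃ c ∈ verts, c ≠ r₁ ∧ c ≠ r₂ ∧ (p₁ c = x ∨ p₂ c = x)

/-- The edge set of a branch: the root edge together with all parent-child edges. -/
def Branch.edges (B : Branch) : Finset (Sym2 ℕ) :=
  insert s(B.r₁, B.r₂)
    ((B.verts.filter (fun x => x ≠ B.r₁ ∧ x ≠ B.r₂)).biUnion
      (fun x => {s(x, B.p₁ x), s(x, B.p₂ x)}))

/-- The branch viewed as a simple graph on `ℕ`. -/
def Branch.graph (B : Branch) : SimpleGraph ℕ :=
  SimpleGraph.fromEdgeSet (B.edges : Set (Sym2 ℕ))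

/-!
Every surviving vertex can be joined, avoiding `t₁, t₂`, to the leaf or to a surviving root:
descend through surviving parents (ranks decrease), and if both parents of some vertex `x` are
removed, then `{t₁, t₂}` are exactly these parents, both of rank below `x`, so the chain of
children from `x` up to the leaf, along which the rank only grows, avoids them. The surviving roots
are adjacent to each other, so there are at most two pieces: that of the leaf and that of the
roots, and they are different because the removal disconnects the branch.
-/

namespace SimpleGraph

variable {V : Type*}

def ReachableIn (G : SimpleGraph V) (s : Set V) (u v : V) : Prop :=
  ∃ w : G.Walk u v, ∀ z ∈ w.support, z ∈ s

variable {G : SimpleGraph V} {s t : Set V} {u v x : V}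

namespace ReachableIn

lemma refl (hu : u ∈ s) : G.ReachableIn s u u := ⟨.nil, by simpa using hu⟩

lemma of_adj (h : G.Adj u v) (hu : u ∈ s) (hv : v ∈ s) : G.ReachableIn s u v :=
  ⟨.cons h .nil, by simp [hu, hv]⟩

lemma start_mem (h : G.ReachableIn s u v) : u ∈ s :=
  h.elim fun w hw => hw u w.start_mem_support

lemma end_mem (h : G.ReachableIn s u v) : v ∈ s :=
  h.elim fun w hw => hw v w.end_mem_support

lemma symm (h : G.ReachableIn s u v) : G.ReachableIn s v u := by
  obtain ⟨w, hw⟩ := h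
  exact ⟨w.reverse, fun z hz => hw z (by simpa using hz)⟩

lemma trans (h : G.ReachableIn s u v) (h' : G.ReachableIn s v x) : G.ReachableIn s u x := by
  obtain ⟨w, hw⟩ := h
  obtain ⟨w', hw'⟩ := h'
  exact ⟨w.append w', fun z hz => ((w.mem_support_append_iff w').mp hz).elim (hw z) (hw' z)⟩

lemma mono (h : G.ReachableIn s u v) (hst : s ⊆ t) : G.ReachableIn t u v :=
  h.imp fun _ hw z hz => hst (hw z hz)

lemma of_mem_support {w : G.Walk u v} (hw : ∀ z ∈ w.support, z ∈ s) {z : V}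
    (hz : z ∈ w.support) : G.ReachableIn s z v := by
  classical
  exact ⟨w.dropUntil z hz, fun _ hy => hw _ (w.support_dropUntil_subset_support hz hy)⟩

lemma within_class (hu : G.ReachableIn s u x) (hv : G.ReachableIn s v x) :
    G.ReachableIn {z | G.ReachableIn s z x} u v := by
  obtain ⟨w, hw⟩ := hu.trans hv.symm
  exact ⟨w, fun z hz => (of_mem_support hw hz).trans hv⟩

end ReachableIn

theorem exists_two_pieces_of_reachableIn [DecidableEq V] (S : Finset V) {v r : V}
    (hv : v ∈ S) (hr : r ∈ S)
    (hcover : ∀ z ∈ S, G.ReachableIn S z v ∨ G.ReachableIn S z r)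
    (hsep : ¬ G.ReachableIn S v r) :
    ∃ A C : Finset V, A.Nonempty ∧ C.Nonempty ∧ Disjoint A C ∧ A ∪ C = S ∧
      (∀ a ∈ A, ∀ c ∈ C, ¬ G.Adj a c) ∧
      (∀ x ∈ A, ∀ y ∈ A, G.ReachableIn A x y) ∧
      (∀ x ∈ C, ∀ y ∈ C, G.ReachableIn C x y) ∧
      v ∈ A ∧ ∀ z, G.ReachableIn S z r → z ∈ C := by
  classical
  set A := S.filter (G.ReachableIn S · v)
  set C := S.filter (G.ReachableIn S · r)
  have memA {z : V} : z ∈ A ↔ G.ReachableIn S z v :=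
    Finset.mem_filter.trans ⟨And.right, fun h => ⟨h.start_mem, h⟩⟩
  have memC {z : V} : z ∈ C ↔ G.ReachableIn S z r :=
    Finset.mem_filter.trans ⟨And.right, fun h => ⟨h.start_mem, h⟩⟩
  have not_both {z : V} (hzv : G.ReachableIn S z v) (hzr : G.ReachableIn S z r) : False :=
    hsep (hzv.symm.trans hzr)
  refine ⟨A, C, ⟨v, memA.2 (.refl hv)⟩, ⟨r, memC.2 (.refl hr)⟩,
    Finset.disjoint_left.2 fun z hzA hzC => not_both (memA.1 hzA) (memC.1 hzC), ?_,
    fun a ha c hc hac => not_both ((ReachableIn.of_adj hac.symm (memC.1 hc).start_mem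
      (memA.1 ha).start_mem).trans (memA.1 ha)) (memC.1 hc),
    fun x hx y hy => ((memA.1 hx).within_class (memA.1 hy)).mono fun _ => memA.2,
    fun x hx y hy => ((memC.1 hx).within_class (memC.1 hy)).mono fun _ => memC.2,
    memA.2 (.refl hv), fun _ => memC.2⟩
  rw [← Finset.filter_or]
  exact Finset.filter_true_of_mem hcover

end SimpleGraph

namespace Branch

open SimpleGraph

variable (B : Branch)

lemma adj_roots : B.graph.Adj B.r₁ B.r₂ := by
  rw [Branch.graph, SimpleGraph.fromEdgeSet_adj]
  exact ⟨by simp [Branch.edges], B.root_ne⟩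

lemma adj_parent₁ {x : ℕ} (hx : x ∈ B.verts) (h1 : x ≠ B.r₁) (h2 : x ≠ B.r₂) :
    B.graph.Adj x (B.p₁ x) := by
  rw [Branch.graph, SimpleGraph.fromEdgeSet_adj]
  refine ⟨?_, fun h => (B.rank_lt₁ x hx h1 h2).ne (congrArg B.rank h.symm)⟩
  simp only [Finset.mem_coe, Branch.edges, Finset.mem_insert, Finset.mem_biUnion,
    Finset.mem_filter]
  exact Or.inr ⟨x, ⟨hx, h1, h2⟩, by simp⟩

lemma adj_parent₂ {x : ℕ} (hx : x ∈ B.verts) (h1 : x ≠ B.r₁) (h2 : x ≠ B.r₂) :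
    B.graph.Adj x (B.p₂ x) := by
  rw [Branch.graph, SimpleGraph.fromEdgeSet_adj]
  refine ⟨?_, fun h => (B.rank_lt₂ x hx h1 h2).ne (congrArg B.rank h.symm)⟩
  simp only [Finset.mem_coe, Branch.edges, Finset.mem_insert, Finset.mem_biUnion,
    Finset.mem_filter]
  exact Or.inr ⟨x, ⟨hx, h1, h2⟩, by simp⟩

lemma exists_child {x : ℕ} (hx : x ∈ B.verts) (h1 : x ≠ B.r₁) (h2 : x ≠ B.r₂)
    (hlf : x ≠ B.lf) : ∃ c ∈ B.verts, c ≠ B.r₁ ∧ c ≠ B.r₂ ∧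
      B.graph.Adj x c ∧ B.rank x < B.rank c := by
  obtain ⟨c, hc, hc1, hc2, rfl | rfl⟩ := B.has_child x hx h1 h2 hlf
  · exact ⟨c, hc, hc1, hc2, (B.adj_parent₁ hc hc1 hc2).symm, B.rank_lt₁ c hc hc1 hc2⟩
  · exact ⟨c, hc, hc1, hc2, (B.adj_parent₂ hc hc1 hc2).symm, B.rank_lt₂ c hc hc1 hc2⟩

lemma reachableIn_leaf_through_higher_rank {x : ℕ} (hx : x ∈ B.verts) (h1 : x ≠ B.r₁)
    (h2 : x ≠ B.r₂) : B.graph.ReachableIn {z | z ∈ B.verts ∧ B.rank x ≤ B.rank z} x B.lf := by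
  induction h : B.verts.sup B.rank - B.rank x using Nat.strong_induction_on generalizing x with
  | _ n ih =>
  obtain rfl | hlf := eq_or_ne x B.lf
  · exact .refl ⟨hx, le_rfl⟩
  obtain ⟨c, hc, hc1, hc2, hadj, hxc⟩ := B.exists_child hx h1 h2 hlf
  have hc_le : B.rank c ≤ B.verts.sup B.rank := Finset.le_sup hc
  exact (ReachableIn.of_adj (s := {z | z ∈ B.verts ∧ B.rank x ≤ B.rank z}) hadj ⟨hx, le_rfl⟩
    ⟨hc, hxc.le⟩).trans
    ((ih _ (by omega) hc hc1 hc2 rfl).mono fun z hz => ⟨hz.1, hxc.le.trans hz.2⟩)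

lemma mem_verts_sdiff {t₁ t₂ z : ℕ} :
    z ∈ B.verts \ {t₁, t₂} ↔ z ∈ B.verts ∧ z ≠ t₁ ∧ z ≠ t₂ := by
  simp [not_or]

lemma reachableIn_leaf_or_root (t₁ t₂ : ℕ) {x : ℕ} (hx : x ∈ B.verts \ {t₁, t₂}) :
    B.graph.ReachableIn ↑(B.verts \ {t₁, t₂}) x B.lf ∨
      B.graph.ReachableIn ↑(B.verts \ {t₁, t₂}) x B.r₁ ∨
      B.graph.ReachableIn ↑(B.verts \ {t₁, t₂}) x B.r₂ := by
  induction h : B.rank x using Nat.strong_induction_on generalizing x with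
  | _ n ih =>
  subst h
  obtain ⟨hxv, hxt₁, hxt₂⟩ := B.mem_verts_sdiff.1 hx
  obtain rfl | h1 := eq_or_ne x B.r₁
  · exact .inr (.inl (.refl hx))
  obtain rfl | h2 := eq_or_ne x B.r₂
  · exact .inr (.inr (.refl hx))
  obtain rfl | hlf := eq_or_ne x B.lf
  · exact .inl (.refl hx)
  have via_parent {p : ℕ} (hadj : B.graph.Adj x p) (hp : p ∈ B.verts \ {t₁, t₂})
      (hpx : B.rank p < B.rank x) := by
    have hxp := ReachableIn.of_adj (s := ↑(B.verts \ {t₁, t₂})) hadj hx hp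
    exact (ih _ hpx hp rfl).imp hxp.trans (Or.imp hxp.trans hxp.trans)
  by_cases hp₁ : B.p₁ x ∈ B.verts \ {t₁, t₂}
  · exact via_parent (B.adj_parent₁ hxv h1 h2) hp₁ (B.rank_lt₁ x hxv h1 h2)
  by_cases hp₂ : B.p₂ x ∈ B.verts \ {t₁, t₂}
  · exact via_parent (B.adj_parent₂ hxv h1 h2) hp₂ (B.rank_lt₂ x hxv h1 h2)
  have hrank : B.rank t₁ < B.rank x ∧ B.rank t₂ < B.rank x := by
    have hne := B.parents_ne x hxv h1 h2
    have hr₁ := B.rank_lt₁ x hxv h1 h2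
    have hr₂ := B.rank_lt₂ x hxv h1 h2
    simp only [B.mem_verts_sdiff, B.parent₁_mem x hxv h1 h2, B.parent₂_mem x hxv h1 h2,
      true_and, not_and_or, not_not] at hp₁ hp₂
    rcases hp₁ with e₁ | e₁ <;> rcases hp₂ with e₂ | e₂ <;> rw [e₁, e₂] at hne <;>
      rw [e₁] at hr₁ <;> rw [e₂] at hr₂ <;>
      first | exact absurd rfl hne | exact ⟨hr₁, hr₂⟩ | exact ⟨hr₂, hr₁⟩
  refine .inl ((B.reachableIn_leaf_through_higher_rank hxv h1 h2).mono fun z hz => ?_)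
  refine B.mem_verts_sdiff.2 ⟨hz.1, ?_, ?_⟩ <;> rintro rfl <;> have := hz.2 <;> omega

lemma exists_root_reachableIn {s : Set ℕ} (h : B.r₁ ∈ s ∨ B.r₂ ∈ s) :
    ∃ r ∈ s, (B.r₁ ∈ s → B.graph.ReachableIn s B.r₁ r) ∧
      (B.r₂ ∈ s → B.graph.ReachableIn s B.r₂ r) := by
  rcases h with h | h
  · exact ⟨B.r₁, h, fun _ => .refl h, fun h₂ => (ReachableIn.of_adj B.adj_roots h h₂).symm⟩
  · exact ⟨B.r₂, h, fun h₁ => ReachableIn.of_adj B.adj_roots h₁ h, fun _ => .refl h⟩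

end Branch

/-- if removing two vertices `t₁, t₂` (neither of which is the
leaf, and at most one of which is a root) disconnects the branch, then the
remaining vertices split into exactly two connected pieces with no edges
between them, the leaf lying in one piece and every remaining root in the other. -/
theorem branch_removal_two_components (B : Branch) (t₁ t₂ : ℕ)
    (hv₁ : B.lf ≠ t₁) (hv₂ : B.lf ≠ t₂)
    (hroots : ¬ ((B.r₁ = t₁ ∨ B.r₁ = t₂) ∧ (B.r₂ = t₁ ∨ B.r₂ = t₂)))
    (hdisc : ∃ x ∈ B.verts, ∃ y ∈ B.verts, x ≠ t₁ ∧ x ≠ t₂ ∧ y ≠ t₁ ∧ y ≠ t₂ ∧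
      ¬ ∃ w : B.graph.Walk x y, t₁ ∉ w.support ∧ t₂ ∉ w.support) :
    ∃ A C : Finset ℕ, A.Nonempty ∧ C.Nonempty ∧ Disjoint A C ∧
      A ∪ C = B.verts \ {t₁, t₂} ∧
      (∀ a ∈ A, ∀ c ∈ C, ¬ B.graph.Adj a c) ∧
      (∀ x ∈ A, ∀ y ∈ A, ∃ w : B.graph.Walk x y, ∀ z ∈ w.support, z ∈ A) ∧
      (∀ x ∈ C, ∀ y ∈ C, ∃ w : B.graph.Walk x y, ∀ z ∈ w.support, z ∈ C) ∧
      B.lf ∈ A ∧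
      (B.r₁ ≠ t₁ → B.r₁ ≠ t₂ → B.r₁ ∈ C) ∧ (B.r₂ ≠ t₁ → B.r₂ ≠ t₂ → B.r₂ ∈ C) := by
  set S := B.verts \ {t₁, t₂}
  obtain ⟨x, hx, y, hy, hx₁, hx₂, hy₁, hy₂, hsep⟩ := hdisc
  have hlf : B.lf ∈ S := B.mem_verts_sdiff.2 ⟨B.leaf_mem, hv₁, hv₂⟩
  have hroot : B.r₁ ∈ S ∨ B.r₂ ∈ S := by
    simp only [S, B.mem_verts_sdiff, B.r₁_mem, B.r₂_mem, true_and]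
    tauto
  obtain ⟨r, hr, hr₁, hr₂⟩ := B.exists_root_reachableIn hroot
  have hcover : ∀ z ∈ S, B.graph.ReachableIn S z B.lf ∨ B.graph.ReachableIn S z r := by
    intro z hz
    rcases B.reachableIn_leaf_or_root t₁ t₂ hz with h | h | h
    exacts [.inl h, .inr (h.trans (hr₁ h.end_mem)), .inr (h.trans (hr₂ h.end_mem))]
  have hlf_r : ¬ B.graph.ReachableIn S B.lf r := by
    intro h
    have to_leaf (z) (hz : z ∈ S) : B.graph.ReachableIn S z B.lf :=
      (hcover z hz).elim id (·.trans h.symm)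
    obtain ⟨w, hw⟩ := (to_leaf x (B.mem_verts_sdiff.2 ⟨hx, hx₁, hx₂⟩)).trans
      (to_leaf y (B.mem_verts_sdiff.2 ⟨hy, hy₁, hy₂⟩)).symm
    exact hsep ⟨w, fun h => (B.mem_verts_sdiff.1 (hw _ h)).2.1 rfl,
      fun h => (B.mem_verts_sdiff.1 (hw _ h)).2.2 rfl⟩
  obtain ⟨A, C, hA, hC, hAC, hunion, hadj, hconnA, hconnC, hlfA, hrC⟩ :=
    SimpleGraph.exists_two_pieces_of_reachableIn S hlf hr hcover hlf_r
  refine ⟨A, C, hA, hC, hAC, hunion, hadj, hconnA, hconnC, hlfA, fun h₁ h₂ => ?_, fun h₁ h₂ => ?_⟩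
  · exact hrC _ (hr₁ (B.mem_verts_sdiff.2 ⟨B.r₁_mem, h₁, h₂⟩))
  · exact hrC _ (hr₂ (B.mem_verts_sdiff.2 ⟨B.r₂_mem, h₁, h₂⟩))
end

section
/- Let B(v) = (V_B, E_B) be a branch and let G be obtained by adding a new vertex q and edges (q, v), (q, r₁), (q, r₂). Then |E_G| = 2|V_G| - 2 and for every proper subset X of V_G with |X| ≥ 2, |E[X]| ≤ 2|X| - 3; that is, G is an M-circuit. -/
/-- The vertex set of the graph `G` obtained from the branch `B` by adding a
new vertex `q`. -/
def extVerts (B : Branch) (q : ℕ) : Finset ℕ := insert q B.verts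

/-- The edge set of the graph `G` obtained from the branch `B` by adding a new
vertex `q` together with the three edges `(q,v)`, `(q,r₁)`, `(q,r₂)`. -/
def extEdges (B : Branch) (q : ℕ) : Finset (Sym2 ℕ) :=
  insert s(q, B.lf) (insert s(q, B.r₁) (insert s(q, B.r₂) B.edges))

/-- The extended graph as a simple graph on `ℕ`. -/
def extGraph (B : Branch) (q : ℕ) : SimpleGraph ℕ :=
  SimpleGraph.fromEdgeSet (extEdges B q : Set (Sym2 ℕ))

open Finset

section InducedEdges

variable {α : Type*} [DecidableEq α]

theorem card_inter_sym2_le_choose_two {E : Finset (Sym2 α)} (hE : ∀ a, s(a, a) ∉ E)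
    (X : Finset α) : #(E ∩ X.sym2) ≤ (#X).choose 2 := by
  rw [← Sym2.card_image_offDiag]
  refine card_le_card fun e he => ?_
  induction e using Sym2.ind with
  | _ a b =>
    obtain ⟨heE, heX⟩ := mem_inter.1 he
    rw [mk_mem_sym2_iff] at heX
    have hab : a ≠ b := by rintro rfl; exact hE a heE
    exact mem_image.2 ⟨(a, b), mem_offDiag.2 ⟨heX.1, heX.2, hab⟩, rfl⟩

theorem card_inter_sym2_le_erase_add (E : Finset (Sym2 α)) (X : Finset α) (x : α) :
    #(E ∩ X.sym2) ≤ #(E ∩ (X.erase x).sym2) + #{y ∈ X | s(x, y) ∈ E} := by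
  calc #(E ∩ X.sym2)
      ≤ #(E ∩ (X.erase x).sym2 ∪ {y ∈ X | s(x, y) ∈ E}.image (s(x, ·))) := by
        refine card_le_card fun e he => ?_
        induction e using Sym2.ind with
        | _ a b =>
          obtain ⟨heE, heX⟩ := mem_inter.1 he
          rw [mk_mem_sym2_iff] at heX
          by_cases ha : a = x
          · subst ha
            exact mem_union_right _ (mem_image.2 ⟨b, mem_filter.2 ⟨heX.2, heE⟩, rfl⟩)
          by_cases hb : b = x
          · subst hb
            rw [Sym2.eq_swap] at heE ⊢
            exact mem_union_right _ (mem_image.2 ⟨a, mem_filter.2 ⟨heX.1, heE⟩, rfl⟩)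
          exact mem_union_left _ (mem_inter.2
            ⟨heE, mk_mem_sym2_iff.2 ⟨mem_erase.2 ⟨ha, heX.1⟩, mem_erase.2 ⟨hb, heX.2⟩⟩⟩)
    _ ≤ #(E ∩ (X.erase x).sym2) + #{y ∈ X | s(x, y) ∈ E} :=
        (card_union_le _ _).trans (Nat.add_le_add_left card_image_le _)

end InducedEdges

namespace Branch

variable (B : Branch)

def nonRoots : Finset ℕ := B.verts \ {B.r₁, B.r₂}

def parents (x : ℕ) : Finset ℕ := {B.p₁ x, B.p₂ x}

def parentEdges (x : ℕ) : Finset (Sym2 ℕ) := (B.parents x).image (s(x, ·))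

variable {B}

theorem mem_nonRoots {x : ℕ} : x ∈ B.nonRoots ↔ x ∈ B.verts ∧ x ≠ B.r₁ ∧ x ≠ B.r₂ := by
  simp [nonRoots]

theorem card_nonRoots_add_two : #B.nonRoots + 2 = #B.verts := by
  have hsub : {B.r₁, B.r₂} ⊆ B.verts := by
    simp [insert_subset_iff, B.r₁_mem, B.r₂_mem]
  rw [nonRoots, card_sdiff_of_subset hsub, card_pair B.root_ne]
  have := card_le_card hsub
  rw [card_pair B.root_ne] at this
  omega

theorem edges_eq : B.edges = insert s(B.r₁, B.r₂) (B.nonRoots.biUnion B.parentEdges) := by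
  rw [edges]
  congr 1
  refine biUnion_congr (by ext; simp [mem_nonRoots]) fun x _ => ?_
  simp [parentEdges, parents, image_insert]

theorem mem_edges {e : Sym2 ℕ} :
    e ∈ B.edges ↔ e = s(B.r₁, B.r₂) ∨ ∃ x ∈ B.nonRoots, ∃ p ∈ B.parents x, s(x, p) = e := by
  simp [edges_eq, parentEdges]

theorem parents_subset_verts {x : ℕ} (hx : x ∈ B.nonRoots) : B.parents x ⊆ B.verts := by
  rw [mem_nonRoots] at hx
  simp [parents, insert_subset_iff, B.parent₁_mem x hx.1 hx.2.1 hx.2.2,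
    B.parent₂_mem x hx.1 hx.2.1 hx.2.2]

theorem rank_lt_of_mem_parents {x p : ℕ} (hx : x ∈ B.nonRoots) (hp : p ∈ B.parents x) :
    B.rank p < B.rank x := by
  rw [mem_nonRoots] at hx
  simp only [parents, mem_insert, mem_singleton] at hp
  rcases hp with rfl | rfl
  exacts [B.rank_lt₁ x hx.1 hx.2.1 hx.2.2, B.rank_lt₂ x hx.1 hx.2.1 hx.2.2]

theorem card_parents {x : ℕ} (hx : x ∈ B.nonRoots) : #(B.parents x) = 2 := by
  rw [mem_nonRoots] at hx
  exact card_pair (B.parents_ne x hx.1 hx.2.1 hx.2.2)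

theorem card_parents_inter_le_one {x p : ℕ} {X : Finset ℕ} (hp : p ∈ B.parents x)
    (hpX : p ∉ X) : #(B.parents x ∩ X) ≤ 1 := by
  have hsub : B.parents x ∩ X ⊆ (B.parents x).erase p :=
    fun y hy => mem_erase.2 ⟨fun h => hpX (h ▸ (mem_inter.1 hy).2), (mem_inter.1 hy).1⟩
  have := card_le_card hsub
  rw [card_erase_of_mem hp] at this
  have : #(B.parents x) ≤ 2 := card_le_two
  omega

theorem card_parents_inter_le_two (x : ℕ) (X : Finset ℕ) : #(B.parents x ∩ X) ≤ 2 :=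
  (card_le_card inter_subset_left).trans card_le_two

/-- A parent edge cannot be read backwards, since parents have lower rank. -/
theorem eq_of_mk_eq_mk {x y p p' : ℕ} (hx : x ∈ B.nonRoots) (hy : y ∈ B.nonRoots)
    (hp : p ∈ B.parents x) (hp' : p' ∈ B.parents y) (h : s(x, p) = s(y, p')) : x = y := by
  rcases Sym2.eq_iff.1 h with ⟨hxy, -⟩ | ⟨rfl, rfl⟩
  · exact hxy
  · have := rank_lt_of_mem_parents hx hp
    have := rank_lt_of_mem_parents hy hp'
    omega

theorem card_edges_add_three : #B.edges + 3 = 2 * #B.verts := by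
  have hroot : s(B.r₁, B.r₂) ∉ B.nonRoots.biUnion B.parentEdges := by
    simp only [mem_biUnion, parentEdges, mem_image, not_exists, not_and]
    intro x hx p _ h
    rw [mem_nonRoots] at hx
    rcases Sym2.eq_iff.1 h with ⟨h, -⟩ | ⟨h, -⟩
    exacts [hx.2.1 h, hx.2.2 h]
  have hdisj : (B.nonRoots : Set ℕ).PairwiseDisjoint B.parentEdges := by
    intro x hx y hy hxy
    simp only [Function.onFun, parentEdges, disjoint_left, mem_image]
    rintro _ ⟨p, hp, rfl⟩ ⟨p', hp', h⟩
    exact hxy (eq_of_mk_eq_mk hy hx hp' hp h).symm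
  have hcard : ∀ x ∈ B.nonRoots, #(B.parentEdges x) = 2 := fun x hx => by
    rw [parentEdges, card_image_of_injective _ fun _ _ => Sym2.congr_right.1, card_parents hx]
  rw [edges_eq, card_insert_of_notMem hroot, card_biUnion hdisj, sum_congr rfl hcard, sum_const,
    smul_eq_mul, ← card_nonRoots_add_two]
  ring

theorem mk_self_notMem_edges (a : ℕ) : s(a, a) ∉ B.edges := by
  rw [mem_edges]
  rintro (h | ⟨x, hx, p, hp, h⟩)
  · exact B.root_ne (Sym2.mk_isDiag_iff.1 (h ▸ Sym2.mk_isDiag_iff.2 rfl))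
  · have hxp : x = p := Sym2.mk_isDiag_iff.1 (h ▸ Sym2.mk_isDiag_iff.2 rfl)
    exact (rank_lt_of_mem_parents hx hp).ne (congrArg B.rank hxp).symm

theorem mem_verts_of_mk_mem_edges {a b : ℕ} (h : s(a, b) ∈ B.edges) : a ∈ B.verts := by
  rcases mem_edges.1 h with h | ⟨x, hx, p, hp, h⟩
  · rcases Sym2.eq_iff.1 h with ⟨rfl, -⟩ | ⟨rfl, -⟩
    exacts [B.r₁_mem, B.r₂_mem]
  · rcases Sym2.eq_iff.1 h with ⟨rfl, -⟩ | ⟨-, rfl⟩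
    exacts [(mem_nonRoots.1 hx).1, parents_subset_verts hx hp]

theorem card_le_card_inter_nonRoots_add_two {X : Finset ℕ} (hXV : X ⊆ B.verts) :
    #X ≤ #(X ∩ B.nonRoots) + 2 := by
  have hsub : X ⊆ X ∩ B.nonRoots ∪ {B.r₁, B.r₂} := fun y hy => by
    by_cases hr : y ≠ B.r₁ ∧ y ≠ B.r₂
    · exact mem_union_left _ (mem_inter.2 ⟨hy, mem_nonRoots.2 ⟨hXV hy, hr⟩⟩)
    · exact mem_union_right _ (by simpa [or_iff_not_and_not] using hr)
  exact (card_le_card hsub).trans ((card_union_le _ _).trans (Nat.add_le_add_left card_le_two _))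

/-- A vertex of maximal rank in `X` has no child in `X`, so its neighbours in `X` are parents. -/
theorem filter_mk_mem_edges_subset {X : Finset ℕ} {x : ℕ} (hx : x ∈ B.nonRoots)
    (hmax : ∀ y ∈ X ∩ B.nonRoots, B.rank y ≤ B.rank x) :
    {y ∈ X | s(x, y) ∈ B.edges} ⊆ B.parents x ∩ X := by
  intro y hy
  obtain ⟨hyX, hxy⟩ := mem_filter.1 hy
  rw [mem_nonRoots] at hx
  rcases mem_edges.1 hxy with h | ⟨z, hz, p, hp, h⟩
  · rcases Sym2.eq_iff.1 h with ⟨h, -⟩ | ⟨h, -⟩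
    exacts [absurd h hx.2.1, absurd h hx.2.2]
  · rcases Sym2.eq_iff.1 h with ⟨rfl, rfl⟩ | ⟨rfl, rfl⟩
    · exact mem_inter.2 ⟨hp, hyX⟩
    · have := hmax z (mem_inter.2 ⟨hyX, hz⟩)
      have := rank_lt_of_mem_parents hz hp
      omega

theorem card_edges_inter_sym2_le_erase_add {X : Finset ℕ} {x : ℕ} (hx : x ∈ B.nonRoots)
    (hmax : ∀ y ∈ X ∩ B.nonRoots, B.rank y ≤ B.rank x) :
    #(B.edges ∩ X.sym2) ≤ #(B.edges ∩ (X.erase x).sym2) + #(B.parents x ∩ X) :=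
  (card_inter_sym2_le_erase_add _ _ _).trans
    (Nat.add_le_add_left (card_le_card (filter_mk_mem_edges_subset hx hmax)) _)

theorem card_edges_inter_sym2_add_three_le {X : Finset ℕ} (hXV : X ⊆ B.verts) (hX : 2 ≤ #X) :
    #(B.edges ∩ X.sym2) + 3 ≤ 2 * #X := by
  induction X using Finset.strongInduction with
  | H X ih =>
    rcases hX.eq_or_lt with hX | hX
    · have := card_inter_sym2_le_choose_two (mk_self_notMem_edges (B := B)) X
      rw [← hX, Nat.choose_self] at this
      omega
    have hne : (X ∩ B.nonRoots).Nonempty := by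
      have := card_le_card_inter_nonRoots_add_two hXV
      rw [← card_pos]
      omega
    obtain ⟨x, hx, hmax⟩ := exists_max_image _ B.rank hne
    have hxX := (mem_inter.1 hx).1
    have hstep := card_edges_inter_sym2_le_erase_add (mem_inter.1 hx).2 hmax
    have hrest := ih _ (erase_ssubset hxX) ((erase_subset _ _).trans hXV)
      (by rw [card_erase_of_mem hxX]; omega)
    have := card_parents_inter_le_two (B := B) x X
    have := card_erase_add_one hxX
    omega

theorem card_edges_inter_sym2_add_four_le {X : Finset ℕ} (hXV : X ⊆ B.verts)
    (h₁ : B.r₁ ∈ X) (h₂ : B.r₂ ∈ X) {c p : ℕ} (hc : c ∈ X ∩ B.nonRoots)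
    (hp : p ∈ B.parents c) (hpX : p ∉ X) :
    #(B.edges ∩ X.sym2) + 4 ≤ 2 * #X := by
  induction X using Finset.strongInduction with
  | H X ih =>
    obtain ⟨x, hx, hmax⟩ := exists_max_image _ B.rank ⟨c, hc⟩
    obtain ⟨hxX, hxN⟩ := mem_inter.1 hx
    have hstep := card_edges_inter_sym2_le_erase_add hxN hmax
    have hcard := card_erase_add_one hxX
    have hr₁ : B.r₁ ∈ X.erase x := mem_erase.2 ⟨fun h => (mem_nonRoots.1 hxN).2.1 h.symm, h₁⟩
    have hr₂ : B.r₂ ∈ X.erase x := mem_erase.2 ⟨fun h => (mem_nonRoots.1 hxN).2.2 h.symm, h₂⟩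
    have hXV' : X.erase x ⊆ B.verts := (erase_subset _ _).trans hXV
    by_cases hxp : ∃ p' ∈ B.parents x, p' ∉ X
    · obtain ⟨p', hp', hp'X⟩ := hxp
      have := card_parents_inter_le_one hp' hp'X
      have h2 : 2 ≤ #(X.erase x) := by
        rw [← card_pair B.root_ne]
        exact card_le_card (insert_subset hr₁ (singleton_subset_iff.2 hr₂))
      have := card_edges_inter_sym2_add_three_le hXV' h2
      omega
    · have hcx : c ≠ x := by rintro rfl; exact hxp ⟨p, hp, hpX⟩
      have := ih _ (erase_ssubset hxX) hXV' hr₁ hr₂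
        (mem_inter.2 ⟨mem_erase.2 ⟨hcx, (mem_inter.1 hc).1⟩, (mem_inter.1 hc).2⟩)
        (fun h => hpX (mem_of_mem_erase h))
      have := card_parents_inter_le_two (B := B) x X
      omega

/-- A vertex `y` of maximal rank outside `X` is neither a root nor the leaf, so it has a child,
which lies in `X` by maximality. -/
theorem exists_parent_notMem {X : Finset ℕ} (hXV : X ⊂ B.verts) (h₁ : B.r₁ ∈ X) (h₂ : B.r₂ ∈ X)
    (hlf : B.lf ∈ X) : ∃ c ∈ X ∩ B.nonRoots, ∃ p ∈ B.parents c, p ∉ X := by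
  obtain ⟨y, hy, hmax⟩ := exists_max_image (B.verts \ X) B.rank
    (sdiff_nonempty.2 (not_subset_of_ssubset hXV))
  obtain ⟨hyV, hyX⟩ := mem_sdiff.1 hy
  obtain ⟨c, hcV, hc₁, hc₂, hcy⟩ := B.has_child y hyV (fun h => hyX (h ▸ h₁))
    (fun h => hyX (h ▸ h₂)) (fun h => hyX (h ▸ hlf))
  have hcN : c ∈ B.nonRoots := mem_nonRoots.2 ⟨hcV, hc₁, hc₂⟩
  have hy : y ∈ B.parents c := by rcases hcy with rfl | rfl <;> simp [parents]
  have hcX : c ∈ X := by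
    by_contra hcX
    have := hmax c (mem_sdiff.2 ⟨hcV, hcX⟩)
    have := rank_lt_of_mem_parents hcN hy
    omega
  exact ⟨c, mem_inter.2 ⟨hcX, hcN⟩, y, hy, hyX⟩

theorem card_edges_inter_sym2_add_four_le_of_ssubset {X : Finset ℕ} (hXV : X ⊂ B.verts)
    (h₁ : B.r₁ ∈ X) (h₂ : B.r₂ ∈ X) (hlf : B.lf ∈ X) :
    #(B.edges ∩ X.sym2) + 4 ≤ 2 * #X := by
  obtain ⟨c, hc, p, hp, hpX⟩ := exists_parent_notMem hXV h₁ h₂ hlf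
  exact card_edges_inter_sym2_add_four_le hXV.subset h₁ h₂ hc hp hpX

theorem card_edges_inter_sym2_add_card_inter_add_one_le {X : Finset ℕ} (hXV : X ⊂ B.verts)
    (hX : X.Nonempty) : #(B.edges ∩ X.sym2) + #({B.lf, B.r₁, B.r₂} ∩ X) + 1 ≤ 2 * #X := by
  by_cases hT : {B.lf, B.r₁, B.r₂} ⊆ X
  · have := B.card_edges_inter_sym2_add_four_le_of_ssubset hXV (hT (by simp)) (hT (by simp))
      (hT (by simp))
    have : #({B.lf, B.r₁, B.r₂} ∩ X) ≤ 3 := (card_le_card inter_subset_left).trans card_le_three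
    omega
  have hT2 : #({B.lf, B.r₁, B.r₂} ∩ X) ≤ 2 := by
    have := card_lt_card (ssubset_of_subset_of_ne inter_subset_left
      fun h => hT (inter_eq_left.1 h))
    have : #({B.lf, B.r₁, B.r₂} : Finset ℕ) ≤ 3 := card_le_three
    omega
  by_cases h2 : 2 ≤ #X
  · have := B.card_edges_inter_sym2_add_three_le hXV.subset h2
    omega
  · have := card_inter_sym2_le_choose_two (mk_self_notMem_edges (B := B)) X
    rw [Nat.choose_eq_zero_of_lt (show #X < 2 by omega)] at this
    have : #({B.lf, B.r₁, B.r₂} ∩ X) ≤ #X := card_le_card inter_subset_right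
    have := hX.card_pos
    omega

end Branch

section Extension

variable {B : Branch} {q : ℕ}

theorem mem_extEdges {e : Sym2 ℕ} :
    e ∈ extEdges B q ↔ e = s(q, B.lf) ∨ e = s(q, B.r₁) ∨ e = s(q, B.r₂) ∨ e ∈ B.edges := by
  simp only [extEdges, mem_insert]

theorem card_extEdges (hq : q ∉ B.verts) : #(extEdges B q) = #B.edges + 3 := by
  have hnew : ∀ a, s(q, a) ∉ B.edges := fun a h => hq (Branch.mem_verts_of_mk_mem_edges h)
  rw [extEdges, card_insert_of_notMem, card_insert_of_notMem, card_insert_of_notMem (hnew _)]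
  all_goals
    simp only [mem_insert, Sym2.eq_iff, hnew, or_false]
    grind [B.root_ne, B.leaf_ne_r₁, B.leaf_ne_r₂, B.r₁_mem, B.r₂_mem]

theorem extEdges_inter_sym2_of_notMem {X : Finset ℕ} (hqX : q ∉ X) :
    extEdges B q ∩ X.sym2 = B.edges ∩ X.sym2 := by
  ext e
  simp only [mem_inter, mem_extEdges]
  constructor
  · rintro ⟨(rfl | rfl | rfl | he), heX⟩
    all_goals first | exact ⟨he, heX⟩ | exact absurd (mk_mem_sym2_iff.1 heX).1 hqX
  · exact fun ⟨he, heX⟩ => ⟨Or.inr (Or.inr (Or.inr he)), heX⟩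

theorem filter_mk_mem_extEdges_subset (hq : q ∉ B.verts) (X : Finset ℕ) :
    {y ∈ X | s(q, y) ∈ extEdges B q} ⊆ {B.lf, B.r₁, B.r₂} ∩ X.erase q := by
  intro y hy
  obtain ⟨hyX, hqy⟩ := mem_filter.1 hy
  have hyT : y ∈ ({B.lf, B.r₁, B.r₂} : Finset ℕ) := by
    rcases mem_extEdges.1 hqy with h | h | h | h
    · simp [Sym2.congr_right.1 h]
    · simp [Sym2.congr_right.1 h]
    · simp [Sym2.congr_right.1 h]
    · exact absurd (Branch.mem_verts_of_mk_mem_edges h) hq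
  have hyV : y ∈ B.verts := by
    simp only [mem_insert, mem_singleton] at hyT
    rcases hyT with rfl | rfl | rfl
    exacts [B.leaf_mem, B.r₁_mem, B.r₂_mem]
  exact mem_inter.2 ⟨hyT, mem_erase.2 ⟨fun h => hq (h ▸ hyV), hyX⟩⟩

theorem card_extEdges_inter_sym2_le (hq : q ∉ B.verts) (X : Finset ℕ) :
    #(extEdges B q ∩ X.sym2) ≤
      #(B.edges ∩ (X.erase q).sym2) + #({B.lf, B.r₁, B.r₂} ∩ X.erase q) := by
  have := card_inter_sym2_le_erase_add (extEdges B q) X q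
  rw [extEdges_inter_sym2_of_notMem (notMem_erase q X)] at this
  exact this.trans (Nat.add_le_add_left (card_le_card (filter_mk_mem_extEdges_subset hq X)) _)

end Extension

/-- the graph `G` obtained from a branch `B(v)` by adding a new
vertex `q` and the edges `(q,v)`, `(q,r₁)`, `(q,r₂)` satisfies the M-circuit
counting conditions: `|E_G| = 2|V_G| - 2` and every proper subset `X` of the
vertices with `|X| ≥ 2` induces at most `2|X| - 3` edges. -/
theorem ext_graph_M_circuit (B : Branch) (q : ℕ) (hq : q ∉ B.verts) :
    ((extEdges B q).card : ℤ) = 2 * (extVerts B q).card - 2 ∧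
    ∀ X ⊂ extVerts B q, 2 ≤ X.card →
      (((extEdges B q ∩ X.sym2).card : ℤ)) ≤ 2 * X.card - 3 := by
  have hE := B.card_edges_add_three
  refine ⟨?_, fun X hX hX2 => ?_⟩
  · rw [card_extEdges hq, extVerts, card_insert_of_notMem hq]
    omega
  by_cases hqX : q ∈ X
  · have hX' : X.erase q ⊂ B.verts := by
      refine ssubset_of_subset_of_ne (subset_insert_iff.1 hX.subset) fun h => hX.ne ?_
      rw [extVerts, ← h, insert_erase hqX]
    have hcard := card_erase_add_one hqX
    have := card_extEdges_inter_sym2_le hq X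
    have := B.card_edges_inter_sym2_add_card_inter_add_one_le hX' (card_pos.1 (by omega))
    omega
  · rw [extEdges_inter_sym2_of_notMem hqX]
    have := B.card_edges_inter_sym2_add_three_le
      ((subset_insert_iff_of_notMem hqX).1 hX.subset) hX2
    omega
end
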